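/- Let f₁,…,f_N ∈ K[x] (K ⊆ ℂ) with isolated root ξ ∈ ℂⁿ, Q the 𝔪_ξ-primary component, B a basis of ℂ[x]/Q as in the orthogonal primal-dual lemma with exponent set E, and Mᵢ(μ) the parametric multiplication matrices for E. Then the ideal of ℂ[μ] generated by all entries of N_{ξ,μ}(f_k) for k = 1,…,N together with all entries of the commutators Mᵢ(μ)Mⱼ(μ) − Mⱼ(μ)Mᵢ(μ) equals the maximal ideal generated by μ_{α,β} − ν_{α,β} for (α,β) ∈ E×∂(E), where ν_{α,β} are the coefficients of the dual basis of Q^⊥. -/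

import Mathlib

open MvPolynomial

noncomputable section

/-- Iterated partial derivative operator `∂^β` on polynomials. -/
def pdiff {n : ℕ} {K : Type} [CommSemiring K] (β : Fin n →₀ ℕ) :
    Module.End K (MvPolynomial (Fin n) K) :=
  (List.ofFn fun i : Fin n =>
    ((MvPolynomial.pderiv i : Derivation K _ _).toLinearMap ^ (β i))).prod

/-- Action of a polynomial differential operator at the point ξ:
`Λ = Σ_β c_β ∂^β ↦ (p ↦ Σ_β c_β (∂^β p)(ξ))`. -/
def dapply {n : ℕ} (ξ : Fin n → ℂ) (Λ : (Fin n →₀ ℕ) →₀ ℂ)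
    (p : MvPolynomial (Fin n) ℂ) : ℂ :=
  Λ.sum fun β c => c * eval ξ (pdiff β p)

def dapplyL {n : ℕ} (ξ : Fin n → ℂ) (p : MvPolynomial (Fin n) ℂ) :
    ((Fin n →₀ ℕ) →₀ ℂ) →ₗ[ℂ] ℂ where
  toFun Λ := dapply ξ Λ p
  map_add' a b := Finsupp.sum_add_index' (fun β => zero_mul _)
    (fun β c d => add_mul c d _)
  map_smul' c a := by
    classical
    simp only [RingHom.id_apply, smul_eq_mul, dapply]
    rw [Finsupp.sum_smul_index fun β => zero_mul ((eval ξ) ((pdiff β) p)), Finsupp.mul_sum]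
    exact Finsupp.sum_congr fun β _ => mul_assoc _ _ _

/-- The space `I^⊥ ∩ ℂ[∂_ξ]` of polynomial differential operators at ξ
annihilating the ideal `I`. -/
def dualSpace {n : ℕ} (I : Ideal (MvPolynomial (Fin n) ℂ)) (ξ : Fin n → ℂ) :
    Submodule ℂ ((Fin n →₀ ℕ) →₀ ℂ) :=
  ⨅ p ∈ I, LinearMap.ker (dapplyL ξ p)

lemma mem_dualSpace {n : ℕ} {I : Ideal (MvPolynomial (Fin n) ℂ)} {ξ : Fin n → ℂ}
    {Λ : (Fin n →₀ ℕ) →₀ ℂ} : Λ ∈ dualSpace I ξ ↔ ∀ p ∈ I, dapply ξ Λ p = 0 := by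
  simp only [dualSpace, Submodule.mem_iInf, LinearMap.mem_ker]
  rfl

/-- The multiplicity of ξ as a root of I. -/
def mult {n : ℕ} (I : Ideal (MvPolynomial (Fin n) ℂ)) (ξ : Fin n → ℂ) : ℕ :=
  Module.finrank ℂ (dualSpace I ξ)

/-- Order (total degree in the ∂ variables) of a polynomial differential operator. -/
def ordD {n : ℕ} (Λ : (Fin n →₀ ℕ) →₀ ℂ) : ℕ :=
  Λ.support.sup fun β => β.sum fun _ k => k

/-- The nil-index of I at ξ: maximal order of elements of the dual space. -/
def nilIndex {n : ℕ} (I : Ideal (MvPolynomial (Fin n) ℂ)) (ξ : Fin n → ℂ) : ℕ :=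
  sSup {t | ∃ Λ ∈ dualSpace I ξ, Λ ≠ 0 ∧ ordD Λ = t}

/-- The maximal ideal at ξ. -/
def maxIdeal {n : ℕ} (ξ : Fin n → ℂ) : Ideal (MvPolynomial (Fin n) ℂ) :=
  Ideal.span (Set.range fun i => X i - C (ξ i))

/-- `(x-ξ)^α`. -/
def xpow {n : ℕ} (ξ : Fin n → ℂ) (α : Fin n →₀ ℕ) : MvPolynomial (Fin n) ℂ :=
  ∏ i : Fin n, (X i - C (ξ i)) ^ (α i)

/-- multi-index factorial -/
def mfact {n : ℕ} (β : Fin n →₀ ℕ) : ℕ := ∏ i : Fin n, Nat.factorial (β i)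
def mdeg {n : ℕ} (β : Fin n →₀ ℕ) : ℕ := β.sum fun _ k => k

/-- Pairs `(j, β)` indexing the free parameters `μ_{α_j,β}` of the parametric
multiplication matrices: `β = α_k + e_i` lies outside `E` and `|α_k| < |α_j|`. -/
def UsedPair {n δ : ℕ} (α : Fin δ → (Fin n →₀ ℕ))
    (p : Fin δ × (Fin n →₀ ℕ)) : Prop :=
  ∃ (k : Fin δ) (i : Fin n), p.2 = α k + Finsupp.single i 1 ∧
    (∀ l, α l ≠ p.2) ∧ mdeg (α k) < mdeg (α p.1)

open Classical in
/-- The parametric multiplication matrix `Mᵢ(μ)` associated to the exponent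
set `E = {α₀,…,α_{δ−1}}`: entry `(j,k)` is `1` if `α_j = α_k + e_i`, `0` if
`α_k + e_i ∈ E` with `α_j ≠ α_k + e_i`, the fresh variable `μ_{α_j, α_k+e_i}`
if `|α_k| < |α_j|`, and `0` otherwise (strict triangular structure). -/
noncomputable def pmm {n δ : ℕ} (α : Fin δ → (Fin n →₀ ℕ)) (K : Type)
    [CommSemiring K] (i : Fin n) :
    Matrix (Fin δ) (Fin δ) (MvPolynomial (Subtype (UsedPair α)) K) :=
  Matrix.of fun j k =>
    if α j = α k + Finsupp.single i 1 then 1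
    else if h2 : ∃ l, α l = α k + Finsupp.single i 1 then 0
    else if h3 : mdeg (α k) < mdeg (α j) then
      MvPolynomial.X ⟨(j, α k + Finsupp.single i 1),
        k, i, rfl, fun l hl => h2 ⟨l, hl⟩, h3⟩
    else 0

/-- The parametric multiplication matrix viewed in `K[z,μ]`
(`z`-variables in the left summand, `μ`-variables in the right summand). -/
noncomputable def pmmT {n δ : ℕ} (α : Fin δ → (Fin n →₀ ℕ)) (K : Type)
    [CommSemiring K] (i : Fin n) :
    Matrix (Fin δ) (Fin δ)
      (MvPolynomial ((Fin n) ⊕ (Subtype (UsedPair α))) K) :=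
  (pmm α K i).map (rename Sum.inr)

/-- `M(μ)^γ = M₁(μ)^{γ₁}⋯Mₙ(μ)^{γₙ}` in the fixed order of the indices. -/
noncomputable def pmmPowT {n δ : ℕ} (α : Fin δ → (Fin n →₀ ℕ)) (K : Type)
    [CommSemiring K] (γ : Fin n →₀ ℕ) :
    Matrix (Fin δ) (Fin δ)
      (MvPolynomial ((Fin n) ⊕ (Subtype (UsedPair α))) K) :=
  (List.ofFn fun i : Fin n => (pmmT α K i) ^ (γ i)).prod

/-- The parametric normal form `N_{z,μ}(p) = Σ_γ (1/γ!)∂^γ(p)·M(μ)^γ[1]`,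
an element of `K[z,μ]^δ`; the sum is finite since `M(μ)^γ = 0` for `|γ| ≥ δ`,
so it is truncated at coordinatewise bound δ. -/
noncomputable def pnf {n δ : ℕ} [NeZero δ] (α : Fin δ → (Fin n →₀ ℕ))
    (K : Type) [Field K] (p : MvPolynomial (Fin n) K) :
    Fin δ → MvPolynomial ((Fin n) ⊕ (Subtype (UsedPair α))) K := fun j =>
  ∑ γ ∈ Finset.Iic (Finsupp.equivFunOnFinite.symm fun _ : Fin n => δ),
    (mfact γ : K)⁻¹ •
      (rename Sum.inl (pdiff γ p) *
        (pmmPowT α K γ).mulVec (Pi.single 0 1) j)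

/-- The commutator ideal `C`, generated by the entries of
`Mᵢ(μ)Mⱼ(μ) − Mⱼ(μ)Mᵢ(μ)`. -/
noncomputable def commIdeal {n δ : ℕ} (α : Fin δ → (Fin n →₀ ℕ)) (K : Type)
    [CommRing K] :
    Ideal (MvPolynomial ((Fin n) ⊕ (Subtype (UsedPair α))) K) :=
  Ideal.span {t | ∃ (i i' : Fin n) (j k : Fin δ),
    t = (pmmT α K i * pmmT α K i' - pmmT α K i' * pmmT α K i) j k}

/-- The parametric normal form specialized at `z = ξ`:
`N_{ξ,μ}(p) = Σ_γ (1/γ!)∂^γp(ξ)·M(μ)^γ[1] ∈ ℂ[μ]^δ`. -/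
noncomputable def pnfXi {n δ : ℕ} [NeZero δ] (α : Fin δ → (Fin n →₀ ℕ))
    (ξ : Fin n → ℂ) (p : MvPolynomial (Fin n) ℂ) :
    Fin δ → MvPolynomial (Subtype (UsedPair α)) ℂ := fun j =>
  ∑ γ ∈ Finset.Iic (Finsupp.equivFunOnFinite.symm fun _ : Fin n => δ),
    (mfact γ : ℂ)⁻¹ •
      (C (eval ξ (pdiff γ p)) *
        ((List.ofFn fun i : Fin n => (pmm α ℂ i) ^ (γ i)).prod.mulVec
          (Pi.single 0 1) j))

/-!
For an algebra map `φ : ℂ[μ] → S` put `Mᵢ = φ(Mᵢ(μ))`. These matrices are strictly lower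
triangular for the degree grading of `E`, so when they commute the truncated Taylor sum
`N(p) = Σ_γ (1/γ!) ∂^γ p(ξ) M^γ` is the algebra map `ℂ[x] → Mat_δ(S)` sending `x - ξ` to `M`,
and `φ(N_{ξ,μ}(p)) = N(p) e₀`.

At `μ = ν` the `Mᵢ` are the multiplication matrices of `ℂ[x]/Q` in the basis `B`, and
`N(p) e₀ = (Λ_j(p))_j`, which vanishes on the `f_k ∈ Q`: every generator vanishes at `ν`.
Conversely, modulo the generators, `p ↦ N(p) e₀` kills the `f_k` and hence `Q`: for `q ∈ Q` some
`p` with `p(ξ) ≠ 0` has `pq ∈ (f)`, and `N(p)` is `p(ξ)` plus a nilpotent. As `M^{α_k} e₀ = e_k`,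
this map is `p ↦ (Λ_j(p))_j`, and its value at `(x-ξ)^β` has `μ_{α_j,β} = (M^β e₀)_j` as `j`-th
entry, so `μ = ν`.
-/

open scoped Matrix

section MultiPower

variable {G : Type*} {n : ℕ}

def mpow [Monoid G] (M : Fin n → G) (γ : Fin n →₀ ℕ) : G :=
  (List.ofFn fun i => M i ^ γ i).prod

section Monoid

variable [Monoid G] (M : Fin n → G)

@[simp]
lemma mpow_zero : mpow M 0 = 1 := by
  simp [mpow]

lemma mpow_single (i : Fin n) (m : ℕ) : mpow M (Finsupp.single i m) = M i ^ m := by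
  induction n with
  | zero => exact i.elim0
  | succ n ih =>
    simp only [mpow, List.ofFn_succ, List.prod_cons]
    cases i using Fin.cases with
    | zero => simp [Fin.succ_ne_zero]
    | succ i =>
      simpa [mpow, Finsupp.single_apply, Fin.succ_ne_zero, eq_comm (a := (0 : Fin (n + 1)))]
        using ih (fun l => M l.succ) i

lemma List.prod_ofFn_pow_add (hM : ∀ i j, Commute (M i) (M j)) (σ τ : Fin n → ℕ) :
    (List.ofFn fun i => M i ^ (σ i + τ i)).prod
      = (List.ofFn fun i => M i ^ σ i).prod * (List.ofFn fun i => M i ^ τ i).prod := by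
  induction n with
  | zero => simp
  | succ n ih =>
    have hc : Commute (M 0 ^ τ 0) (List.ofFn fun i : Fin n => M i.succ ^ σ i.succ).prod :=
      Commute.list_prod_right _ _ fun x hx => by
        obtain ⟨i, rfl⟩ := List.mem_ofFn.1 hx
        exact (hM 0 i.succ).pow_pow _ _
    simp only [List.ofFn_succ, List.prod_cons]
    rw [ih (fun i => M i.succ) (fun i j => hM _ _) (fun i => σ i.succ) (fun i => τ i.succ),
      pow_add, mul_assoc, mul_assoc, ← mul_assoc (M 0 ^ τ 0), hc.eq, mul_assoc]

lemma mpow_add (hM : ∀ i j, Commute (M i) (M j)) (β γ : Fin n →₀ ℕ) :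
    mpow M (β + γ) = mpow M β * mpow M γ :=
  List.prod_ofFn_pow_add M hM β γ

lemma mpow_add_single (hM : ∀ i j, Commute (M i) (M j)) (γ : Fin n →₀ ℕ) (i : Fin n) :
    mpow M (γ + Finsupp.single i 1) = M i * mpow M γ := by
  rw [add_comm, mpow_add M hM, mpow_single, pow_one]

lemma commute_mpow (hM : ∀ i j, Commute (M i) (M j)) (β γ : Fin n →₀ ℕ) :
    Commute (mpow M β) (mpow M γ) := by
  rw [Commute, SemiconjBy, ← mpow_add M hM, ← mpow_add M hM, add_comm]

lemma Commute.mpow_right {a : G} (h : ∀ i, Commute a (M i)) (γ : Fin n →₀ ℕ) :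
    Commute a (mpow M γ) :=
  Commute.list_prod_right _ _ fun x hx => by
    obtain ⟨i, rfl⟩ := List.mem_ofFn.1 hx
    exact (h i).pow_right _

lemma map_mpow {H F : Type*} [Monoid H] [FunLike F G H] [MonoidHomClass F G H] (f : F)
    (γ : Fin n →₀ ℕ) : f (mpow M γ) = mpow (fun i => f (M i)) γ := by
  simp [mpow, map_list_prod, List.map_ofFn, Function.comp_def]

end Monoid

lemma mpow_eq_zero [MonoidWithZero G] {M : Fin n → G} {γ : Fin n →₀ ℕ} {i : Fin n}
    (h : M i ^ γ i = 0) : mpow M γ = 0 :=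
  List.prod_eq_zero (List.mem_ofFn.2 ⟨i, h⟩)

lemma isNilpotent_mpow [Semiring G] {M : Fin n → G} (hM : ∀ i j, Commute (M i) (M j))
    (hnil : ∀ i, IsNilpotent (M i)) {γ : Fin n →₀ ℕ} (hγ : γ ≠ 0) : IsNilpotent (mpow M γ) := by
  obtain ⟨i, hi⟩ := Finsupp.ne_iff.1 hγ
  rw [← tsub_add_cancel_of_le (Finsupp.single_le_iff.2 (Nat.one_le_iff_ne_zero.2 hi)),
    mpow_add_single M hM]
  exact (Commute.mpow_right M (hM i) _).isNilpotent_mul_right (hnil i)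

end MultiPower

@[elab_as_elim]
lemma Finsupp.induction_add_single {ι : Type*} {motive : (ι →₀ ℕ) → Prop} (γ : ι →₀ ℕ)
    (zero : motive 0) (add_single : ∀ i γ, motive γ → motive (γ + Finsupp.single i 1)) :
    motive γ := by
  refine Finsupp.induction₂ γ zero fun i m γ _ hm ih => ?_
  clear hm
  induction m with
  | zero => simpa using ih
  | succ m ihm => rw [Finsupp.single_add, ← add_assoc]; exact add_single _ _ ihm

section MultiIndex

variable {n : ℕ}

lemma mdeg_eq_degree (β : Fin n →₀ ℕ) : mdeg β = β.degree := rfl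

lemma mdeg_add_single (β : Fin n →₀ ℕ) (i : Fin n) :
    mdeg (β + Finsupp.single i 1) = mdeg β + 1 := by
  simp [mdeg_eq_degree]

lemma mfact_ne_zero (β : Fin n →₀ ℕ) : (mfact β : ℂ) ≠ 0 :=
  Nat.cast_ne_zero.2 (Finset.prod_ne_zero_iff.2 fun _ _ => Nat.factorial_ne_zero _)

end MultiIndex

section PartialDerivatives

variable {n : ℕ} {K : Type} [CommSemiring K]

lemma pderiv_comm (i j : Fin n) (p : MvPolynomial (Fin n) K) :
    pderiv i (pderiv j p) = pderiv j (pderiv i p) := by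
  induction p using MvPolynomial.induction_on' with
  | monomial s a =>
    rcases eq_or_ne i j with rfl | hij
    · rfl
    simp only [pderiv_monomial, tsub_tsub, add_comm (Finsupp.single j 1), Finsupp.tsub_apply,
      Finsupp.single_eq_of_ne hij, Finsupp.single_eq_of_ne hij.symm, tsub_zero, mul_right_comm]
  | add p q hp hq => simp only [map_add, hp, hq]

lemma pdiff_eq_mpow (β : Fin n →₀ ℕ) :
    (pdiff β : Module.End K (MvPolynomial (Fin n) K))
      = mpow (fun i => (pderiv i : Derivation K _ _).toLinearMap) β := rfl

lemma pdiff_zero : (pdiff 0 : Module.End K (MvPolynomial (Fin n) K)) = 1 :=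
  mpow_zero _

lemma pdiff_add_single (γ : Fin n →₀ ℕ) (i : Fin n) (p : MvPolynomial (Fin n) K) :
    pdiff (γ + Finsupp.single i 1) p = pderiv i (pdiff γ p) := by
  rw [pdiff_eq_mpow, mpow_add_single _ fun i j => LinearMap.ext (pderiv_comm i j)]
  rfl

lemma pdiff_monomial (σ s : Fin n →₀ ℕ) (a : K) :
    pdiff σ (monomial s a) = monomial (s - σ) (a * ∏ i, ((s i).descFactorial (σ i) : K)) := by
  induction σ using Finsupp.induction_add_single with
  | zero => simp [pdiff_zero]
  | add_single i σ ih =>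
    have hfac : ∀ l, (s l).descFactorial ((σ + Finsupp.single i 1 : Fin n →₀ ℕ) l)
        = (if l = i then s i - σ i else 1) * (s l).descFactorial (σ l) := by
      intro l
      rcases eq_or_ne l i with rfl | hne
      · simp [Nat.descFactorial_succ]
      · simp [hne]
    rw [pdiff_add_single, ih, pderiv_monomial, tsub_tsub]
    simp only [hfac, Nat.cast_mul, Nat.cast_ite, Nat.cast_one, Finset.prod_mul_distrib,
      Finset.prod_ite_eq', Finset.mem_univ, if_true, Finsupp.tsub_apply]
    congr 1
    ring

end PartialDerivatives

section Recenter

variable {n : ℕ} (ξ : Fin n → ℂ)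

def recenter : MvPolynomial (Fin n) ℂ →ₐ[ℂ] MvPolynomial (Fin n) ℂ :=
  aeval fun i => X i - C (ξ i)

lemma recenter_surjective : Function.Surjective (recenter ξ) := by
  have h : (recenter ξ).comp (aeval fun i => X i + C (ξ i)) = AlgHom.id ℂ _ :=
    MvPolynomial.algHom_ext fun i => by simp [recenter]
  exact fun p => ⟨_, AlgHom.congr_fun h p⟩

lemma recenter_monomial (β : Fin n →₀ ℕ) (c : ℂ) :
    recenter ξ (monomial β c) = C c * xpow ξ β := by
  rw [recenter, aeval_monomial, Finsupp.prod_fintype _ _ fun _ => pow_zero _]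
  rfl

@[simp]
lemma xpow_zero : xpow ξ 0 = 1 := by
  simp [xpow]

lemma xpow_add (β γ : Fin n →₀ ℕ) : xpow ξ (β + γ) = xpow ξ β * xpow ξ γ := by
  simp [xpow, pow_add, Finset.prod_mul_distrib]

lemma xpow_add_single (β : Fin n →₀ ℕ) (i : Fin n) :
    xpow ξ (β + Finsupp.single i 1) = (X i - C (ξ i)) * xpow ξ β := by
  rw [xpow_add, mul_comm]
  congr 1
  simp [xpow, Finsupp.single_apply, pow_ite]

lemma eval_xpow (τ : Fin n →₀ ℕ) : eval ξ (xpow ξ τ) = if τ = 0 then 1 else 0 := by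
  split_ifs with h
  · simp [h]
  · obtain ⟨i, hi⟩ := Finsupp.ne_iff.1 h
    simpa [xpow, Finset.prod_eq_zero_iff] using ⟨i, hi⟩

lemma pdiff_recenter (γ : Fin n →₀ ℕ) (p : MvPolynomial (Fin n) ℂ) :
    pdiff γ (recenter ξ p) = recenter ξ (pdiff γ p) := by
  have hcomm (i : Fin n) : Commute (recenter ξ).toLinearMap
      (pderiv i : Derivation ℂ _ _).toLinearMap := by
    refine LinearMap.ext fun p => ?_
    induction p using MvPolynomial.induction_on with
    | C a => simp [recenter]
    | add p q hp hq => simp_all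
    | mul_X p j hp =>
      simp_all [recenter, pderiv_X, Pi.single_apply, apply_ite]
  exact (LinearMap.congr_fun ((Commute.mpow_right _ hcomm γ).eq) p).symm

lemma eval_pdiff_xpow (γ β : Fin n →₀ ℕ) :
    eval ξ (pdiff γ (xpow ξ β)) = if γ = β then (mfact β : ℂ) else 0 := by
  have hβ : xpow ξ β = recenter ξ (monomial β 1) := by simp [recenter_monomial]
  rw [hβ, pdiff_recenter, pdiff_monomial, recenter_monomial, eval_mul, eval_C, eval_xpow,
    one_mul]
  rcases eq_or_ne γ β with rfl | hγβ
  · simp [mfact, Nat.descFactorial_self]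
  rw [if_neg hγβ]
  split_ifs with hle
  · obtain ⟨-, i, hi⟩ := Finsupp.lt_def.1 (lt_of_le_of_ne (tsub_eq_zero_iff_le.1 hle) hγβ.symm)
    simpa [Finset.prod_eq_zero_iff] using ⟨i, hi⟩
  · simp

@[elab_as_elim]
lemma xpow_induction {motive : MvPolynomial (Fin n) ℂ → Prop} (p : MvPolynomial (Fin n) ℂ)
    (add : ∀ p q, motive p → motive q → motive (p + q))
    (smul_xpow : ∀ (c : ℂ) β, motive (c • xpow ξ β)) : motive p := by
  obtain ⟨q, rfl⟩ := recenter_surjective ξ p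
  induction q using MvPolynomial.induction_on' with
  | monomial β c => simpa [recenter_monomial, smul_eq_C_mul] using smul_xpow c β
  | add q r hq hr => simpa using add _ _ hq hr

end Recenter

section NormalForm

variable {n : ℕ} (ξ : Fin n → ℂ)

def taylorCoeff (γ : Fin n →₀ ℕ) : MvPolynomial (Fin n) ℂ →ₗ[ℂ] ℂ :=
  (mfact γ : ℂ)⁻¹ • ((aeval ξ).toLinearMap ∘ₗ pdiff γ)

lemma taylorCoeff_apply (γ : Fin n →₀ ℕ) (p : MvPolynomial (Fin n) ℂ) :
    taylorCoeff ξ γ p = (mfact γ : ℂ)⁻¹ * eval ξ (pdiff γ p) := by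
  simp [taylorCoeff]

lemma taylorCoeff_zero (p : MvPolynomial (Fin n) ℂ) : taylorCoeff ξ 0 p = eval ξ p := by
  simp [taylorCoeff_apply, pdiff_zero, mfact]

lemma taylorCoeff_xpow (γ β : Fin n →₀ ℕ) :
    taylorCoeff ξ γ (xpow ξ β) = if γ = β then 1 else 0 := by
  rw [taylorCoeff_apply, eval_pdiff_xpow]
  split_ifs with h
  · exact h ▸ inv_mul_cancel₀ (mfact_ne_zero γ)
  · exact mul_zero _

def box (n d : ℕ) : Finset (Fin n →₀ ℕ) :=
  Finset.Iic (Finsupp.equivFunOnFinite.symm fun _ : Fin n => d)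

lemma mem_box {d : ℕ} {γ : Fin n →₀ ℕ} : γ ∈ box n d ↔ ∀ i, γ i ≤ d := by
  simp [box, Finsupp.le_def]

variable {A : Type*} [Ring A] [Algebra ℂ A]

def normalForm (d : ℕ) (M : Fin n → A) : MvPolynomial (Fin n) ℂ →ₗ[ℂ] A :=
  ∑ γ ∈ box n d, (taylorCoeff ξ γ).smulRight (mpow M γ)

lemma normalForm_apply (d : ℕ) (M : Fin n → A) (p : MvPolynomial (Fin n) ℂ) :
    normalForm ξ d M p = ∑ γ ∈ box n d, taylorCoeff ξ γ p • mpow M γ := by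
  simp [normalForm]

variable {ξ} {d : ℕ} {M : Fin n → A}

lemma normalForm_xpow (hnil : ∀ i, M i ^ (d + 1) = 0) (β : Fin n →₀ ℕ) :
    normalForm ξ d M (xpow ξ β) = mpow M β := by
  simp only [normalForm_apply, taylorCoeff_xpow, ite_smul, one_smul, zero_smul,
    Finset.sum_ite_eq']
  split_ifs with hβ
  · rfl
  · obtain ⟨i, hi⟩ : ∃ i, d < β i := by simpa [mem_box] using hβ
    exact (mpow_eq_zero (pow_eq_zero_of_le hi (hnil i))).symm

lemma normalForm_mul (hM : ∀ i j, Commute (M i) (M j)) (hnil : ∀ i, M i ^ (d + 1) = 0)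
    (p q : MvPolynomial (Fin n) ℂ) :
    normalForm ξ d M (p * q) = normalForm ξ d M p * normalForm ξ d M q := by
  induction p using xpow_induction ξ with
  | add p p' hp hp' => simp [add_mul, hp, hp']
  | smul_xpow c β =>
    induction q using xpow_induction ξ with
    | add q q' hq hq' => rw [mul_add, map_add, hq, hq', map_add, mul_add]
    | smul_xpow c' γ =>
      rw [smul_mul_smul_comm, ← xpow_add, map_smul, map_smul, map_smul, normalForm_xpow hnil,
        normalForm_xpow hnil, normalForm_xpow hnil, mpow_add M hM, smul_mul_smul_comm]

lemma isUnit_normalForm (hM : ∀ i j, Commute (M i) (M j)) (hnil : ∀ i, M i ^ (d + 1) = 0)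
    {p : MvPolynomial (Fin n) ℂ} (hp : eval ξ p ≠ 0) : IsUnit (normalForm ξ d M p) := by
  have h0 : (0 : Fin n →₀ ℕ) ∈ box n d := by simp [mem_box]
  rw [normalForm_apply, ← Finset.add_sum_erase _ _ h0, taylorCoeff_zero, mpow_zero,
    Algebra.smul_def, mul_one]
  refine IsNilpotent.isUnit_add_left_of_commute ?_ (hp.isUnit.map (algebraMap ℂ A))
    (Algebra.commutes _ _).symm
  refine Commute.isNilpotent_sum (fun γ hγ => ?_) fun γ γ' _ _ => ?_
  · exact (isNilpotent_mpow hM (fun i => ⟨_, hnil i⟩) (Finset.ne_of_mem_erase hγ)).smul _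
  · exact ((commute_mpow M hM γ γ').smul_left _).smul_right _

end NormalForm

section MatrixNormalForm

variable {n : ℕ} {ξ : Fin n → ℂ} {ι R : Type*} [Fintype ι] [DecidableEq ι] [CommRing R]
  [Algebra ℂ R] {d : ℕ} {M : Fin n → Matrix ι ι R}

lemma eq_normalForm_mulVec (hM : ∀ i j, Commute (M i) (M j)) (hnil : ∀ i, M i ^ (d + 1) = 0)
    (L : MvPolynomial (Fin n) ℂ →ₗ[ℂ] (ι → R))
    (hL : ∀ i p, L ((X i - C (ξ i)) * p) = M i *ᵥ L p) (p : MvPolynomial (Fin n) ℂ) :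
    L p = normalForm ξ d M p *ᵥ L 1 := by
  have hxpow (β : Fin n →₀ ℕ) (q : MvPolynomial (Fin n) ℂ) :
      L (xpow ξ β * q) = mpow M β *ᵥ L q := by
    induction β using Finsupp.induction_add_single generalizing q with
    | zero => simp
    | add_single i β ih =>
      rw [xpow_add_single, mul_assoc, hL, ih, mpow_add_single M hM, Matrix.mulVec_mulVec]
  induction p using xpow_induction ξ with
  | add p q hp hq => rw [map_add, map_add, hp, hq, Matrix.add_mulVec]
  | smul_xpow c β =>
    rw [map_smul, map_smul, normalForm_xpow hnil, Matrix.smul_mulVec, ← hxpow, mul_one]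

end MatrixNormalForm

lemma Matrix.pow_eq_zero_of_weight {ι R : Type*} [Fintype ι] [DecidableEq ι] [Semiring R]
    (w : ι → ℕ) {m : ℕ} (hw : ∀ j, w j < m) (M : Matrix ι ι R)
    (hM : ∀ j k, w j ≤ w k → M j k = 0) : M ^ m = 0 := by
  have key (t : ℕ) : ∀ j k, w j < w k + t → (M ^ t) j k = 0 := by
    induction t with
    | zero => exact fun j k h => Matrix.one_apply_ne fun hjk => by subst hjk; omega
    | succ t ih =>
      intro j k h
      rw [pow_succ, Matrix.mul_apply]
      refine Finset.sum_eq_zero fun l _ => ?_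
      by_cases hl : w l ≤ w k
      · rw [hM l k hl, mul_zero]
      · rw [ih j l (by omega), zero_mul]
  ext j k
  exact key m j k (by have := hw j; omega)

section ExponentSet

variable {n δ : ℕ} {α : Fin δ → (Fin n →₀ ℕ)}

@[elab_as_elim]
lemma exponent_induction
    (hconn : ∀ j, α j ≠ 0 → ∃ (k : Fin δ) (i : Fin n), α j = α k + Finsupp.single i 1)
    {motive : Fin δ → Prop} (k : Fin δ) (zero : ∀ k, α k = 0 → motive k)
    (step : ∀ k k' i, α k = α k' + Finsupp.single i 1 → motive k' → motive k) : motive k := by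
  induction hm : mdeg (α k) using Nat.strong_induction_on generalizing k with
  | _ m ih =>
    by_cases hk : α k = 0
    · exact zero k hk
    obtain ⟨k', i, hk'⟩ := hconn k hk
    exact step k k' i hk' (ih _ (by rw [← hm, hk', mdeg_add_single]; omega) k' rfl)

lemma mdeg_lt_card
    (hconn : ∀ j, α j ≠ 0 → ∃ (k : Fin δ) (i : Fin n), α j = α k + Finsupp.single i 1)
    (j : Fin δ) : mdeg (α j) < δ := by
  have hdown (k : Fin δ) : ∀ m ≤ mdeg (α k), ∃ l, mdeg (α l) = m := by
    induction k using exponent_induction hconn with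
    | zero k hk => exact fun m hm => ⟨k, by simp_all [mdeg_eq_degree]⟩
    | step k k' i hk ih =>
      intro m hm
      rw [hk, mdeg_add_single] at hm
      rcases Nat.lt_or_eq_of_le hm with h | h
      · exact ih m (by omega)
      · exact ⟨k, by rw [hk, mdeg_add_single, h]⟩
  have hsub : Finset.range (mdeg (α j) + 1) ⊆ Finset.univ.image fun l => mdeg (α l) :=
    fun m hm => by simpa [eq_comm] using hdown j m (Finset.mem_range_succ_iff.1 hm)
  simpa using (Finset.card_le_card hsub).trans Finset.card_image_le

end ExponentSet

section ParametricMatrices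

variable {n δ : ℕ} (α : Fin δ → (Fin n →₀ ℕ)) {K : Type} [CommSemiring K]

lemma pmm_apply_eq_zero_of_mdeg_le (i : Fin n) {j k : Fin δ} (h : mdeg (α j) ≤ mdeg (α k)) :
    pmm α K i j k = 0 := by
  simp only [pmm, Matrix.of_apply]
  split_ifs with h1 _ h3
  · rw [h1, mdeg_add_single] at h
    omega
  · rfl
  · omega
  · rfl

lemma pmm_apply_of_eq_add_single (hinj : Function.Injective α) {i : Fin n} {k k' : Fin δ}
    (hk : α k = α k' + Finsupp.single i 1) (l : Fin δ) :
    pmm α K i l k' = if l = k then 1 else 0 := by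
  simp [pmm, ← hk, hinj.eq_iff]

lemma pmm_apply_of_usedPair (v : Subtype (UsedPair α)) {k : Fin δ} {i : Fin n}
    (hβ : v.1.2 = α k + Finsupp.single i 1) (hnot : ∀ l, α l ≠ v.1.2)
    (hlt : mdeg (α k) < mdeg (α v.1.1)) : pmm α K i v.1.1 k = X v := by
  obtain ⟨⟨j, β⟩, hv⟩ := v
  dsimp only at hβ hnot hlt ⊢
  subst hβ
  rw [pmm, Matrix.of_apply, if_neg (hnot j), dif_neg fun ⟨l, hl⟩ => hnot l hl, dif_pos hlt]

variable {S : Type} [CommRing S] [Algebra ℂ S] (φ : MvPolynomial (Subtype (UsedPair α)) ℂ →ₐ[ℂ] S)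

lemma mapMatrix_pmm_pow_eq_zero {m : ℕ} (hdeg : ∀ j, mdeg (α j) < m) (i : Fin n) :
    φ.mapMatrix (pmm α ℂ i) ^ m = 0 :=
  Matrix.pow_eq_zero_of_weight (fun j => mdeg (α j)) hdeg _ fun j k h => by
    simp [pmm_apply_eq_zero_of_mdeg_le α i h]

lemma mpow_mapMatrix_pmm_mulVec_single_zero [NeZero δ]
    (hM : ∀ i j, Commute (φ.mapMatrix (pmm α ℂ i)) (φ.mapMatrix (pmm α ℂ j)))
    (hinj : Function.Injective α) (h0 : α 0 = 0)
    (hconn : ∀ j, α j ≠ 0 → ∃ (k : Fin δ) (i : Fin n), α j = α k + Finsupp.single i 1)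
    (k : Fin δ) :
    mpow (fun i => φ.mapMatrix (pmm α ℂ i)) (α k) *ᵥ Pi.single 0 1 = Pi.single k 1 := by
  induction k using exponent_induction hconn with
  | zero k hk => rw [hk, mpow_zero, Matrix.one_mulVec, hinj (hk.trans h0.symm)]
  | step k k' i hk ih =>
    rw [hk, mpow_add_single _ hM, ← Matrix.mulVec_mulVec, ih, Matrix.mulVec_single_one]
    ext l
    simp [pmm_apply_of_eq_add_single α hinj hk, Pi.single_apply]

lemma map_pnfXi [NeZero δ] (ξ : Fin n → ℂ) (p : MvPolynomial (Fin n) ℂ) (j : Fin δ) :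
    φ (pnfXi α ξ p j)
      = (normalForm ξ δ (fun i => φ.mapMatrix (pmm α ℂ i)) p *ᵥ Pi.single 0 1) j := by
  rw [pnfXi, map_sum, normalForm_apply, Matrix.sum_mulVec, Finset.sum_apply]
  refine Finset.sum_congr rfl fun γ _ => ?_
  have hC (c : ℂ) : φ (C c) = algebraMap ℂ S c := φ.commutes c
  rw [map_smul, map_mul, hC, ← Algebra.smul_def, Matrix.smul_mulVec, Pi.smul_apply,
    taylorCoeff_apply, mul_smul]
  rw [← map_mpow]
  simp [mpow]

end ParametricMatrices

section DualBasis

variable {n δ : ℕ} (ξ : Fin n → ℂ) (Λ : Fin δ → ((Fin n →₀ ℕ) →₀ ℂ))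

def dualCoords : MvPolynomial (Fin n) ℂ →ₗ[ℂ] (Fin δ → ℂ) where
  toFun p j := dapply ξ (Λ j) p
  map_add' p q := funext fun j => by
    simp only [dapply, map_add, mul_add, Finsupp.sum_add, Pi.add_apply]
  map_smul' c p := funext fun j => by
    simp only [dapply, map_smul, smul_eval, Finsupp.mul_sum, RingHom.id_apply, Pi.smul_apply,
      smul_eq_mul, mul_left_comm]

@[simp]
lemma dualCoords_apply (p : MvPolynomial (Fin n) ℂ) (j : Fin δ) :
    dualCoords ξ Λ p j = dapply ξ (Λ j) p := rfl

lemma dapply_xpow (Λ₀ : (Fin n →₀ ℕ) →₀ ℂ) (β : Fin n →₀ ℕ) :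
    dapply ξ Λ₀ (xpow ξ β) = Λ₀ β * mfact β := by
  simp only [dapply, eval_pdiff_xpow, mul_ite, mul_zero, Finsupp.sum_ite_eq']
  split_ifs with h
  · rfl
  · rw [Finsupp.notMem_support_iff.1 h, zero_mul]

/-- The value `ν_{α_j,β}` of the parameter `μ_{α_j,β}`: the entry `Λ_j((x-ξ)^β)` of the true
multiplication matrices (see `dapply_xpow`). -/
def dualCoeff {α : Fin δ → (Fin n →₀ ℕ)} (v : Subtype (UsedPair α)) : ℂ :=
  Λ v.1.1 v.1.2 * mfact v.1.2

def dualMulMatrix (α : Fin δ → (Fin n →₀ ℕ)) (i : Fin n) : Matrix (Fin δ) (Fin δ) ℂ :=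
  Matrix.of fun j k => dapply ξ (Λ j) (xpow ξ (α k + Finsupp.single i 1))

variable {ξ Λ} {α : Fin δ → (Fin n →₀ ℕ)} {Q : Ideal (MvPolynomial (Fin n) ℂ)}

lemma dualCoords_xpow (hpair : ∀ i j, dapply ξ (Λ i) (xpow ξ (α j)) = if i = j then 1 else 0)
    (k : Fin δ) : dualCoords ξ Λ (xpow ξ (α k)) = Pi.single k 1 :=
  funext fun j => by simp [hpair, Pi.single_apply]

lemma sub_sum_dualCoords_smul_xpow_mem (b : Module.Basis (Fin δ) ℂ (MvPolynomial (Fin n) ℂ ⧸ Q))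
    (hb : ∀ i, b i = Ideal.Quotient.mk Q (xpow ξ (α i)))
    (hdual : ∀ i, ∀ p ∈ Q, dapply ξ (Λ i) p = 0)
    (hpair : ∀ i j, dapply ξ (Λ i) (xpow ξ (α j)) = if i = j then 1 else 0)
    (p : MvPolynomial (Fin n) ℂ) : p - ∑ k, dualCoords ξ Λ p k • xpow ξ (α k) ∈ Q := by
  set c := b.repr (Ideal.Quotient.mk Q p)
  have hc : p - ∑ k, c k • xpow ξ (α k) ∈ Q := by
    rw [← Ideal.Quotient.eq, ← Ideal.Quotient.mkₐ_eq_mk ℂ, map_sum]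
    conv_lhs => rw [Ideal.Quotient.mkₐ_eq_mk, ← b.sum_repr (Ideal.Quotient.mk Q p)]
    simp [hb, c]
  have hcoords : dualCoords ξ Λ p = c := by
    have h : dualCoords ξ Λ (p - ∑ k, c k • xpow ξ (α k)) = 0 := funext fun j => hdual j _ hc
    rw [map_sub, map_sum, sub_eq_zero] at h
    ext j
    simp [h, map_smul, dualCoords_xpow hpair, Pi.single_apply, -dualCoords_apply]
  rwa [hcoords]

lemma dualCoords_X_sub_C_mul
    (hcoord : ∀ p, p - ∑ k, dualCoords ξ Λ p k • xpow ξ (α k) ∈ Q)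
    (hdual : ∀ i, ∀ p ∈ Q, dapply ξ (Λ i) p = 0) (i : Fin n) (p : MvPolynomial (Fin n) ℂ) :
    dualCoords ξ Λ ((X i - C (ξ i)) * p) = dualMulMatrix ξ Λ α i *ᵥ dualCoords ξ Λ p := by
  have h : dualCoords ξ Λ ((X i - C (ξ i)) * (p - ∑ k, dualCoords ξ Λ p k • xpow ξ (α k))) = 0 :=
    funext fun j => hdual j _ (Q.mul_mem_left _ (hcoord p))
  rw [mul_sub, map_sub, sub_eq_zero, Finset.mul_sum, map_sum] at h
  rw [h]
  ext j
  simp only [Finset.sum_apply, mul_smul_comm, map_smul, Pi.smul_apply, dualCoords_apply,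
    smul_eq_mul, Matrix.mulVec, dotProduct, dualMulMatrix, Matrix.of_apply, xpow_add_single,
    mul_comm (dapply ξ (Λ j) _)]

lemma dualMulMatrix_commute
    (hcoord : ∀ p, p - ∑ k, dualCoords ξ Λ p k • xpow ξ (α k) ∈ Q)
    (hdual : ∀ i, ∀ p ∈ Q, dapply ξ (Λ i) p = 0)
    (hpair : ∀ i j, dapply ξ (Λ i) (xpow ξ (α j)) = if i = j then 1 else 0) (i i' : Fin n) :
    Commute (dualMulMatrix ξ Λ α i) (dualMulMatrix ξ Λ α i') := by
  have key (i i' : Fin n) (k : Fin δ) : (dualMulMatrix ξ Λ α i * dualMulMatrix ξ Λ α i').col k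
      = dualCoords ξ Λ ((X i - C (ξ i)) * ((X i' - C (ξ i')) * xpow ξ (α k))) := by
    rw [← Matrix.mulVec_single_one, ← dualCoords_xpow hpair, ← Matrix.mulVec_mulVec,
      dualCoords_X_sub_C_mul hcoord hdual, dualCoords_X_sub_C_mul hcoord hdual]
  refine Matrix.ext fun j k => ?_
  have h1 := congrFun (key i i' k) j
  have h2 := congrFun (key i' i k) j
  rw [Matrix.col_apply] at h1 h2
  rw [h1, h2, mul_left_comm]

lemma mapMatrix_pmm_aeval_dualCoeff
    (hsupp : ∀ i β, β ∈ (Λ i).support →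
      mdeg β ≤ mdeg (α i) ∧ (β = α i ∨ β ∉ Set.range α))
    (hpair : ∀ i j, dapply ξ (Λ i) (xpow ξ (α j)) = if i = j then 1 else 0) (i : Fin n) :
    (aeval (dualCoeff Λ)).mapMatrix (pmm α ℂ i) = dualMulMatrix ξ Λ α i := by
  ext j k
  simp only [AlgHom.mapMatrix_apply, Matrix.map_apply, pmm, dualMulMatrix, Matrix.of_apply]
  split_ifs with h1 h2 h3
  · rw [map_one, ← h1, hpair, if_pos rfl]
  · obtain ⟨l, hl⟩ := h2
    rw [map_zero, ← hl, hpair, if_neg fun hjl => h1 (by rw [hjl, hl])]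
  · rw [aeval_X, dualCoeff, dapply_xpow]
  · have hβ : Λ j (α k + Finsupp.single i 1) = 0 := by
      by_contra hne
      have := (hsupp j _ (Finsupp.mem_support_iff.2 hne)).1
      rw [mdeg_add_single] at this
      omega
    rw [map_zero, dapply_xpow, hβ, zero_mul]

end DualBasis

lemma mem_span_X_sub_C_of_aeval_eq_zero {σ R : Type*} [CommRing R] {x : σ → R}
    {p : MvPolynomial σ R} (hp : aeval x p = 0) :
    p ∈ Ideal.span (Set.range fun v => X v - C (x v)) := by
  set I := Ideal.span (Set.range fun v => X v - C (x v))
  have h : Ideal.Quotient.mkₐ R I = (Algebra.ofId R _).comp (aeval x) :=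
    MvPolynomial.algHom_ext fun v => by
      rw [AlgHom.comp_apply, aeval_X, Algebra.ofId_apply, Ideal.Quotient.mkₐ_eq_mk,
        IsScalarTower.algebraMap_apply R (MvPolynomial σ R), Ideal.Quotient.algebraMap_eq,
        MvPolynomial.algebraMap_eq, Ideal.Quotient.eq]
      exact Ideal.subset_span ⟨v, rfl⟩
  rw [← Ideal.Quotient.eq_zero_iff_mem, ← Ideal.Quotient.mkₐ_eq_mk R, h, AlgHom.comp_apply, hp,
    map_zero]

section Evaluation

variable {n δ : ℕ} [NeZero δ] {ξ : Fin n → ℂ} {Λ : Fin δ → ((Fin n →₀ ℕ) →₀ ℂ)}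
  {α : Fin δ → (Fin n →₀ ℕ)} {Q : Ideal (MvPolynomial (Fin n) ℂ)}

lemma aeval_dualCoeff_pnfXi (hcoord : ∀ p, p - ∑ k, dualCoords ξ Λ p k • xpow ξ (α k) ∈ Q)
    (hdual : ∀ i, ∀ p ∈ Q, dapply ξ (Λ i) p = 0)
    (hpair : ∀ i j, dapply ξ (Λ i) (xpow ξ (α j)) = if i = j then 1 else 0)
    (hsupp : ∀ i β, β ∈ (Λ i).support →
      mdeg β ≤ mdeg (α i) ∧ (β = α i ∨ β ∉ Set.range α))
    (h0 : α 0 = 0)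
    (hconn : ∀ j, α j ≠ 0 → ∃ (k : Fin δ) (i : Fin n), α j = α k + Finsupp.single i 1)
    (p : MvPolynomial (Fin n) ℂ) (j : Fin δ) :
    aeval (dualCoeff Λ) (pnfXi α ξ p j) = dapply ξ (Λ j) p := by
  have hT : (fun i => (aeval (dualCoeff Λ)).mapMatrix (pmm α ℂ i)) = dualMulMatrix ξ Λ α :=
    funext (mapMatrix_pmm_aeval_dualCoeff hsupp hpair)
  have hnil (i : Fin n) : dualMulMatrix ξ Λ α i ^ (δ + 1) = 0 := by
    rw [← hT]
    exact mapMatrix_pmm_pow_eq_zero α _ (fun j => (mdeg_lt_card hconn j).trans δ.lt_succ_self) i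
  have hone : dualCoords ξ Λ 1 = Pi.single 0 1 := by
    rw [← xpow_zero ξ, ← h0, dualCoords_xpow hpair]
  rw [map_pnfXi, hT, ← hone, ← eq_normalForm_mulVec (dualMulMatrix_commute hcoord hdual hpair)
    hnil _ (dualCoords_X_sub_C_mul hcoord hdual)]
  rfl

variable {S : Type} [CommRing S] [Algebra ℂ S]

lemma normalForm_mulVec_eq_dualCoords {N : ℕ} {M : Fin n → Matrix (Fin δ) (Fin δ) S}
    (hM : ∀ i j, Commute (M i) (M j)) (hnil : ∀ i, M i ^ (δ + 1) = 0)
    (f : Fin N → MvPolynomial (Fin n) ℂ)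
    (hf : ∀ k, normalForm ξ δ M (f k) *ᵥ Pi.single 0 1 = 0)
    (hcomp : ∀ q ∈ Q, ∃ p, eval ξ p ≠ 0 ∧ p * q ∈ Ideal.span (Set.range f))
    (hcoord : ∀ p, p - ∑ k, dualCoords ξ Λ p k • xpow ξ (α k) ∈ Q)
    (hbasis : ∀ k, mpow M (α k) *ᵥ Pi.single 0 1 = Pi.single k 1) (p : MvPolynomial (Fin n) ℂ) :
    normalForm ξ δ M p *ᵥ Pi.single 0 1 = fun j => algebraMap ℂ S (dualCoords ξ Λ p j) := by
  have hspan : ∀ q ∈ Ideal.span (Set.range f), normalForm ξ δ M q *ᵥ Pi.single 0 1 = 0 := by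
    intro q hq
    obtain ⟨c, rfl⟩ := Ideal.mem_span_range_iff_exists_fun.1 hq
    rw [map_sum, Matrix.sum_mulVec]
    refine Finset.sum_eq_zero fun m _ => ?_
    rw [normalForm_mul hM hnil, ← Matrix.mulVec_mulVec, hf, Matrix.mulVec_zero]
  have hQ : ∀ q ∈ Q, normalForm ξ δ M q *ᵥ Pi.single 0 1 = 0 := by
    intro q hq
    obtain ⟨r, hr, hrq⟩ := hcomp q hq
    refine Matrix.mulVec_injective_of_isUnit (isUnit_normalForm hM hnil hr) ?_
    rw [Matrix.mulVec_mulVec, ← normalForm_mul hM hnil, hspan _ hrq, Matrix.mulVec_zero]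
  have h := hQ _ (hcoord p)
  rw [map_sub, Matrix.sub_mulVec, sub_eq_zero, map_sum, Matrix.sum_mulVec] at h
  rw [h]
  ext j
  simp only [map_smul, normalForm_xpow hnil, Matrix.smul_mulVec, hbasis, Finset.sum_apply,
    Pi.smul_apply, Pi.single_apply, smul_ite, smul_zero, Finset.sum_ite_eq, Finset.mem_univ,
    if_true, Algebra.algebraMap_eq_smul_one]

lemma apply_X_eq_algebraMap_dualCoeff {N : ℕ}
    (φ : MvPolynomial (Subtype (UsedPair α)) ℂ →ₐ[ℂ] S)
    (hM : ∀ i j, Commute (φ.mapMatrix (pmm α ℂ i)) (φ.mapMatrix (pmm α ℂ j)))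
    (f : Fin N → MvPolynomial (Fin n) ℂ) (hf : ∀ k j, φ (pnfXi α ξ (f k) j) = 0)
    (hcomp : ∀ q ∈ Q, ∃ p, eval ξ p ≠ 0 ∧ p * q ∈ Ideal.span (Set.range f))
    (hcoord : ∀ p, p - ∑ k, dualCoords ξ Λ p k • xpow ξ (α k) ∈ Q)
    (hinj : Function.Injective α) (h0 : α 0 = 0)
    (hconn : ∀ j, α j ≠ 0 → ∃ (k : Fin δ) (i : Fin n), α j = α k + Finsupp.single i 1)
    (v : Subtype (UsedPair α)) : φ (X v) = algebraMap ℂ S (dualCoeff Λ v) := by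
  set M := fun i => φ.mapMatrix (pmm α ℂ i)
  have hnil (i : Fin n) : M i ^ (δ + 1) = 0 :=
    mapMatrix_pmm_pow_eq_zero α φ (fun j => (mdeg_lt_card hconn j).trans δ.lt_succ_self) i
  have hbasis := mpow_mapMatrix_pmm_mulVec_single_zero α φ hM hinj h0 hconn
  have hNF := normalForm_mulVec_eq_dualCoords hM hnil f
    (fun k => funext fun j => by rw [← map_pnfXi]; exact hf k j) hcomp hcoord hbasis
  obtain ⟨k, i, hβ, hnot, hlt⟩ := v.2
  calc φ (X v) = M i v.1.1 k := by rw [← pmm_apply_of_usedPair α v hβ hnot hlt]; rfl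
    _ = (mpow M v.1.2 *ᵥ Pi.single 0 1) v.1.1 := by
      rw [hβ, mpow_add_single _ hM, ← Matrix.mulVec_mulVec, hbasis, Matrix.mulVec_single_one]
      rfl
    _ = algebraMap ℂ S (dapply ξ (Λ v.1.1) (xpow ξ v.1.2)) := by
      rw [← normalForm_xpow hnil, hNF]
      rfl
    _ = algebraMap ℂ S (dualCoeff Λ v) := by rw [dapply_xpow]; rfl

def structureEquations (α : Fin δ → (Fin n →₀ ℕ)) (ξ : Fin n → ℂ) {N : ℕ}
    (f : Fin N → MvPolynomial (Fin n) ℂ) : Set (MvPolynomial (Subtype (UsedPair α)) ℂ) :=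
  {g | ∃ (k : Fin N) (j : Fin δ), g = pnfXi α ξ (f k) j} ∪
    {g | ∃ (i i' : Fin n) (j k : Fin δ),
      g = (pmm α ℂ i * pmm α ℂ i' - pmm α ℂ i' * pmm α ℂ i) j k}

lemma aeval_dualCoeff_eq_zero_of_mem_structureEquations {N : ℕ}
    {f : Fin N → MvPolynomial (Fin n) ℂ} (hIQ : Ideal.span (Set.range f) ≤ Q)
    (hcoord : ∀ p, p - ∑ k, dualCoords ξ Λ p k • xpow ξ (α k) ∈ Q)
    (hdual : ∀ i, ∀ p ∈ Q, dapply ξ (Λ i) p = 0)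
    (hpair : ∀ i j, dapply ξ (Λ i) (xpow ξ (α j)) = if i = j then 1 else 0)
    (hsupp : ∀ i β, β ∈ (Λ i).support →
      mdeg β ≤ mdeg (α i) ∧ (β = α i ∨ β ∉ Set.range α))
    (h0 : α 0 = 0)
    (hconn : ∀ j, α j ≠ 0 → ∃ (k : Fin δ) (i : Fin n), α j = α k + Finsupp.single i 1)
    {g : MvPolynomial (Subtype (UsedPair α)) ℂ} (hg : g ∈ structureEquations α ξ f) :
    aeval (dualCoeff Λ) g = 0 := by
  obtain ⟨k, j, rfl⟩ | ⟨i, i', j, k, rfl⟩ := hg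
  · rw [aeval_dualCoeff_pnfXi hcoord hdual hpair hsupp h0 hconn]
    exact hdual j _ (hIQ (Ideal.subset_span ⟨k, rfl⟩))
  · have h := sub_eq_zero.2 (dualMulMatrix_commute hcoord hdual hpair i i').eq
    simp only [← mapMatrix_pmm_aeval_dualCoeff hsupp hpair, ← map_mul, ← map_sub] at h
    simpa using congrFun (congrFun h j) k

lemma X_sub_C_dualCoeff_mem_span_structureEquations {N : ℕ}
    (f : Fin N → MvPolynomial (Fin n) ℂ)
    (hcomp : ∀ q ∈ Q, ∃ p, eval ξ p ≠ 0 ∧ p * q ∈ Ideal.span (Set.range f))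
    (hcoord : ∀ p, p - ∑ k, dualCoords ξ Λ p k • xpow ξ (α k) ∈ Q)
    (hinj : Function.Injective α) (h0 : α 0 = 0)
    (hconn : ∀ j, α j ≠ 0 → ∃ (k : Fin δ) (i : Fin n), α j = α k + Finsupp.single i 1)
    (v : Subtype (UsedPair α)) :
    X v - C (dualCoeff Λ v) ∈ Ideal.span (structureEquations α ξ f) := by
  set φ := Ideal.Quotient.mkₐ ℂ (Ideal.span (structureEquations α ξ f))
  have hM (i i' : Fin n) : Commute (φ.mapMatrix (pmm α ℂ i)) (φ.mapMatrix (pmm α ℂ i')) := by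
    refine sub_eq_zero.1 ?_
    rw [← map_mul, ← map_mul, ← map_sub]
    ext j k
    exact Ideal.Quotient.eq_zero_iff_mem.2 (Ideal.subset_span (Or.inr ⟨i, i', j, k, rfl⟩))
  have hf (k : Fin N) (j : Fin δ) : φ (pnfXi α ξ (f k) j) = 0 :=
    Ideal.Quotient.eq_zero_iff_mem.2 (Ideal.subset_span (Or.inl ⟨k, j, rfl⟩))
  rw [← Ideal.Quotient.eq_zero_iff_mem, ← Ideal.Quotient.mkₐ_eq_mk ℂ, map_sub,
    apply_X_eq_algebraMap_dualCoeff φ hM f hf hcomp hcoord hinj h0 hconn,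
    ← MvPolynomial.algebraMap_eq, AlgHom.commutes, sub_self]

end Evaluation

theorem multiplicity_structure_equations_general {n δ N : ℕ} [NeZero δ]
    (f : Fin N → MvPolynomial (Fin n) ℂ) (ξ : Fin n → ℂ)
    (Q : Ideal (MvPolynomial (Fin n) ℂ))
    (hIQ : Ideal.span (Set.range f) ≤ Q)
    (hcomp : ∀ q ∈ Q, ∃ p, eval ξ p ≠ 0 ∧ p * q ∈ Ideal.span (Set.range f))
    -- the orthogonal primal-dual pair of bases for ℂ[x]/Q
    (α : Fin δ → (Fin n →₀ ℕ)) (Λ : Fin δ → ((Fin n →₀ ℕ) →₀ ℂ))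
    (b : Module.Basis (Fin δ) ℂ (MvPolynomial (Fin n) ℂ ⧸ Q))
    (hb : ∀ i, b i = Ideal.Quotient.mk Q (xpow ξ (α i)))
    (h0 : α 0 = 0)
    (hconn : ∀ j, α j ≠ 0 → ∃ (k : Fin δ) (i : Fin n),
      α j = α k + Finsupp.single i 1)
    (hdual : ∀ i, ∀ p ∈ Q, dapply ξ (Λ i) p = 0)
    (hsupp : ∀ i β, β ∈ (Λ i).support →
      mdeg β ≤ mdeg (α i) ∧ (β = α i ∨ β ∉ Set.range α))
    (hpair : ∀ i j, dapply ξ (Λ i) (xpow ξ (α j)) = if i = j then 1 else 0) :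
    -- ν_{α_j,β}: coefficients of the dual basis
    Ideal.span
        ({g | ∃ (k : Fin N) (j : Fin δ), g = pnfXi α ξ (f k) j} ∪
         {g | ∃ (i i' : Fin n) (j k : Fin δ),
            g = (pmm α ℂ i * pmm α ℂ i' - pmm α ℂ i' * pmm α ℂ i) j k})
      = Ideal.span {g | ∃ v : Subtype (UsedPair α),
          g = X v - C ((Λ v.1.1) v.1.2 * (mfact v.1.2 : ℂ))} := by
  have hinj : Function.Injective α := fun i j h => b.injective (by rw [hb, hb, h])
  have hcoord := sub_sum_dualCoords_smul_xpow_mem b hb hdual hpair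
  have hrange : {g | ∃ v : Subtype (UsedPair α), g = X v - C ((Λ v.1.1) v.1.2 * (mfact v.1.2 : ℂ))}
      = Set.range fun v => X v - C (dualCoeff Λ v) := by
    ext
    simp [eq_comm, dualCoeff]
  rw [hrange]
  refine le_antisymm (Ideal.span_le.2 fun g hg => mem_span_X_sub_C_of_aeval_eq_zero ?_)
    (Ideal.span_le.2 ?_)
  · exact aeval_dualCoeff_eq_zero_of_mem_structureEquations hIQ hcoord hdual hpair hsupp h0 hconn hg
  · rintro _ ⟨v, rfl⟩
    exact X_sub_C_dualCoeff_mem_span_structureEquations f hcomp hcoord hinj h0 hconn v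

/-- Theorem 1: the ideal of `ℂ[μ]` generated by the entries of
`N_{ξ,μ}(f_k)` and of the commutators `Mᵢ(μ)Mⱼ(μ) − Mⱼ(μ)Mᵢ(μ)` is the
maximal ideal `𝔪_ν = (μ_{α,β} − ν_{α,β})` of the dual-basis coefficients. -/
theorem multiplicity_structure_equations {n δ N : ℕ} [NeZero δ]
    (f : Fin N → MvPolynomial (Fin n) ℂ) (ξ : Fin n → ℂ)
    (hroot : ∀ m, eval ξ (f m) = 0)
    (hiso : ∃ U ∈ nhds ξ, ∀ x ∈ U, (∀ m, eval x (f m) = 0) → x = ξ)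
    (Q : Ideal (MvPolynomial (Fin n) ℂ))
    (hIQ : Ideal.span (Set.range f) ≤ Q)
    (hprim : Q.IsPrimary) (hrad : Q.radical = maxIdeal ξ)
    (hcomp : ∀ q ∈ Q, ∃ p, eval ξ p ≠ 0 ∧ p * q ∈ Ideal.span (Set.range f))
    -- the orthogonal primal-dual pair of bases for ℂ[x]/Q
    (α : Fin δ → (Fin n →₀ ℕ)) (Λ : Fin δ → ((Fin n →₀ ℕ) →₀ ℂ))
    (b : Module.Basis (Fin δ) ℂ (MvPolynomial (Fin n) ℂ ⧸ Q))
    (hb : ∀ i, b i = Ideal.Quotient.mk Q (xpow ξ (α i)))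
    (h0 : α 0 = 0)
    (hconn : ∀ j, α j ≠ 0 → ∃ (k : Fin δ) (i : Fin n),
      α j = α k + Finsupp.single i 1)
    (hdual : ∀ i, ∀ p ∈ Q, dapply ξ (Λ i) p = 0)
    (hlead : ∀ i, (Λ i) (α i) = (mfact (α i) : ℂ)⁻¹)
    (hsupp : ∀ i β, β ∈ (Λ i).support →
      mdeg β ≤ mdeg (α i) ∧ (β = α i ∨ β ∉ Set.range α))
    (hpair : ∀ i j, dapply ξ (Λ i) (xpow ξ (α j)) = if i = j then 1 else 0)
    (hord : ∀ i j, i ≤ j → mdeg (α i) ≤ mdeg (α j)) :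
    -- ν_{α_j,β}: coefficients of the dual basis
    Ideal.span
        ({g | ∃ (k : Fin N) (j : Fin δ), g = pnfXi α ξ (f k) j} ∪
         {g | ∃ (i i' : Fin n) (j k : Fin δ),
            g = (pmm α ℂ i * pmm α ℂ i' - pmm α ℂ i' * pmm α ℂ i) j k})
      = Ideal.span {g | ∃ v : Subtype (UsedPair α),
          g = X v - C ((Λ v.1.1) v.1.2 * (mfact v.1.2 : ℂ))} :=
  multiplicity_structure_equations_general f ξ Q hIQ hcomp α Λ b hb h0 hconn hdual hsupp hpair

end
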